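/- arXiv:2212.07026 — 8 statements merged into one kernel-verified Lean document; each statement's English description precedes it below -/
import Mathlib

section
/- Let W be a discrete real-valued random variable, let F(w) = P[W' ≤ w] be its CDF (with W' an independent copy), and let AC(W) = max_w P[W = w]. Then for any a ∈ [0,1], a − AC(W) < P[F(W) ≤ a] ≤ a. -/
open MeasureTheory

/-! The set `S = {x | F x ≤ a}` is a lower set of `ℝ`, so it is empty, all of `ℝ`, `Iic t` or
`Iio t`. In the first three cases right-continuity of `F` and its limits at `±∞` force
`P[F(W) ≤ a] = ν S = a` exactly, where `ν` is the law of `W`. In the last case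
`ν S = F(t⁻) ≤ a < F(t) = ν S + ν {t}`, so `ν S` falls short of `a` by less than one atom.
Discreteness is needed only to make the largest atom positive, which gives strictness when
`ν S = a`. -/

open ProbabilityTheory Set Filter Topology Function

theorem IsLowerSet.eq_empty_or_univ_or_Iic_or_Iio {α : Type*} [ConditionallyCompleteLinearOrder α]
    {s : Set α} (hs : IsLowerSet s) :
    s = ∅ ∨ s = univ ∨ (∃ t, s = Iic t) ∨ ∃ t, s = Iio t := by
  rcases s.eq_empty_or_nonempty with hempty | hne
  · exact Or.inl hempty
  by_cases hbdd : BddAbove s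
  · by_cases hmem : sSup s ∈ s
    · exact Or.inr <| Or.inr <| Or.inl
        ⟨sSup s, Subset.antisymm (fun x hx => le_csSup hbdd hx) fun x hx => hs hx hmem⟩
    · refine Or.inr <| Or.inr <| Or.inr ⟨sSup s, Subset.antisymm ?_ ?_⟩
      · exact fun x hx => (le_csSup hbdd hx).lt_of_ne (by rintro rfl; exact hmem hx)
      · intro x hx
        obtain ⟨y, hy, hxy⟩ := exists_lt_of_lt_csSup hne hx
        exact hs hxy.le hy
  · refine Or.inr <| Or.inl <| eq_univ_of_forall fun x => ?_
    obtain ⟨y, hy, hxy⟩ := not_bddAbove_iff.1 hbdd x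
    exact hs hxy.le hy

theorem Set.Countable.exists_measure_singleton_ne_zero {α : Type*} [MeasurableSpace α]
    {μ : Measure α} {s : Set α} (hs : s.Countable) (h : μ s ≠ 0) : ∃ x ∈ s, μ {x} ≠ 0 := by
  by_contra! hzero
  rw [← biUnion_of_singleton s] at h
  exact h ((measure_biUnion_null_iff hs).2 hzero)

section cdf

variable (ν : Measure ℝ) [IsProbabilityMeasure ν]

theorem measureReal_Iio_eq_leftLim_cdf (t : ℝ) : ν.real (Iio t) = leftLim (cdf ν) t := by
  have hnonneg : 0 ≤ leftLim (cdf ν) t :=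
    (cdf_nonneg ν (t - 1)).trans ((monotone_cdf ν).le_leftLim (sub_one_lt t))
  have h := (cdf ν).measure_Iio (tendsto_cdf_atBot ν) t
  rw [measure_cdf, sub_zero] at h
  rw [measureReal_def, h, ENNReal.toReal_ofReal hnonneg]

theorem measureReal_setOf_cdf_le_eq_or_lt_add_atom {a : ℝ} (ha : a ∈ Icc (0 : ℝ) 1) :
    ν.real {x | cdf ν x ≤ a} = a ∨
      ∃ t, ν.real {x | cdf ν x ≤ a} ≤ a ∧ a < ν.real {x | cdf ν x ≤ a} + ν.real {t} := by
  have hlower : IsLowerSet {x | cdf ν x ≤ a} := (isLowerSet_Iic a).preimage (monotone_cdf ν)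
  rcases hlower.eq_empty_or_univ_or_Iic_or_Iio with hS | hS | ⟨t, hS⟩ | ⟨t, hS⟩ <;> rw [hS]
  · have hgt : ∀ x, a < cdf ν x := fun x => not_le.1 fun hx => (hS ▸ hx : x ∈ (∅ : Set ℝ))
    have : a ≤ 0 := ge_of_tendsto (tendsto_cdf_atBot ν) (.of_forall fun x => (hgt x).le)
    left; simp only [measureReal_empty]; linarith [ha.1]
  · have hle : ∀ x, cdf ν x ≤ a := fun x => (hS ▸ mem_univ x : x ∈ {x | cdf ν x ≤ a})
    have : 1 ≤ a := le_of_tendsto (tendsto_cdf_atTop ν) (.of_forall hle)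
    left; simp only [probReal_univ]; linarith [ha.2]
  · have hle : cdf ν t ≤ a := (hS ▸ mem_Iic.2 le_rfl : t ∈ {x | cdf ν x ≤ a})
    have hgt : ∀ x, t < x → a < cdf ν x := fun x hx =>
      not_le.1 fun h => (not_le.2 hx) (hS ▸ h : x ∈ Iic t)
    have hge : a ≤ cdf ν t :=
      ge_of_tendsto ((cdf ν).right_continuous t |>.mono Ioi_subset_Ici_self)
        (eventually_nhdsWithin_of_forall fun x hx => (hgt x hx).le)
    left; rw [← cdf_eq_real]; exact le_antisymm hle hge
  · have hle : ∀ x < t, cdf ν x ≤ a := fun x hx => (hS ▸ hx : x ∈ {x | cdf ν x ≤ a})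
    have hgt : a < cdf ν t := not_le.1 fun h => lt_irrefl t (hS ▸ h : t ∈ Iio t)
    refine Or.inr ⟨t, ?_, ?_⟩
    · rw [measureReal_Iio_eq_leftLim_cdf]
      exact le_of_tendsto ((monotone_cdf ν).tendsto_leftLim t)
        (eventually_nhdsWithin_of_forall hle)
    · rwa [← measureReal_union (by simp) (measurableSet_singleton t), Iio_union_right,
        ← cdf_eq_real]

end cdf

/-- For a discrete real random variable `W` with CDF `F` and maximum atom probability `AC`,
for any `a ∈ [0,1]`, `a - AC < P[F(W) ≤ a] ≤ a`. -/
theorem stmt_0 {Ω : Type*} [MeasurableSpace Ω] (μ : Measure Ω) [IsProbabilityMeasure μ]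
    (W : Ω → ℝ) (hW : Measurable W) (hdisc : (Set.range W).Countable)
    (F : ℝ → ℝ) (hF : ∀ w, F w = (μ {ω | W ω ≤ w}).toReal)
    (AC : ℝ) (hAC : AC = ⨆ w : ℝ, (μ {ω | W ω = w}).toReal)
    (a : ℝ) (ha : a ∈ Set.Icc (0:ℝ) 1) :
    a - AC < (μ {ω | F (W ω) ≤ a}).toReal ∧ (μ {ω | F (W ω) ≤ a}).toReal ≤ a := by
  set ν := μ.map W
  have : IsProbabilityMeasure ν := Measure.isProbabilityMeasure_map hW.aemeasurable
  have hFν : F = cdf ν := funext fun w => by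
    rw [hF, cdf_eq_real, map_measureReal_apply hW measurableSet_Iic]; rfl
  have hatom : ∀ w, μ.real {ω | W ω = w} = ν.real {w} := fun w => by
    rw [map_measureReal_apply hW (measurableSet_singleton w)]; rfl
  have hAC_ge : ∀ w, ν.real {w} ≤ AC := fun w => by
    rw [← hatom, hAC]
    exact le_ciSup (f := fun w => μ.real {ω | W ω = w})
      ⟨1, forall_mem_range.2 fun _ => measureReal_le_one (μ := μ)⟩ w
  have hAC_pos : 0 < AC := by
    have hrange : ν (range W) ≠ 0 := by
      rw [Measure.map_apply hW hdisc.measurableSet, preimage_range, measure_univ]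
      exact one_ne_zero
    obtain ⟨w, -, hw⟩ := hdisc.exists_measure_singleton_ne_zero hrange
    exact (ENNReal.toReal_pos hw (measure_ne_top _ _)).trans_le (hAC_ge w)
  have hlaw : (μ {ω | F (W ω) ≤ a}).toReal = ν.real {x | cdf ν x ≤ a} := by
    have hmeas : MeasurableSet {x | cdf ν x ≤ a} := (monotone_cdf ν).measurable measurableSet_Iic
    rw [hFν, map_measureReal_apply hW hmeas]; rfl
  rw [hlaw]
  rcases measureReal_setOf_cdf_le_eq_or_lt_add_atom ν ha with h | ⟨t, hle, hlt⟩
  · rw [h]; exact ⟨by linarith, le_rfl⟩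
  · exact ⟨by linarith [hAC_ge t], hle⟩
end

section
/- Let W be a discrete real random variable with CDF F, α = P[W < 0], and γ = AC(W) = max_w P[W = w]. Then for any δ > 0, P[F(|W|) ≤ δ and F(W) > δ] ≤ 2α + γ, where F(|W|) denotes the CDF of |W| evaluated at |W|. -/
open MeasureTheory

-- Upper bound: μ {ω | F (W ω) ≤ t} ≤ ofReal t
lemma aux_upper {Ω : Type*} [MeasurableSpace Ω] (μ : Measure Ω) [IsProbabilityMeasure μ]
    (W : Ω → ℝ) (F : ℝ → ℝ)
    (hF : ∀ w, F w = (μ {ω | W ω ≤ w}).toReal)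
    (t : ℝ) (ht : 0 ≤ t) :
    μ {ω | F (W ω) ≤ t} ≤ ENNReal.ofReal t := by
  have hmono : Monotone F := fun a b hab => by
    rw [hF, hF]
    exact ENNReal.toReal_mono (measure_ne_top _ _)
      (measure_mono fun ω h => le_trans h hab)
  have hkey : ∀ w : ℝ, F w ≤ t → μ {ω | W ω ≤ w} ≤ ENNReal.ofReal t := by
    intro w hw
    rw [hF] at hw
    exact (ENNReal.le_ofReal_iff_toReal_le (measure_ne_top _ _) ht).mpr hw
  have hUnion : ∀ g : ℕ → ℝ, Monotone g → (∀ n, F (g n) ≤ t) →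
      μ (⋃ n, {ω | W ω ≤ g n}) ≤ ENNReal.ofReal t := by
    intro g hg hgt
    have hmonoS : Monotone (fun n => {ω | W ω ≤ g n}) := fun m n hmn ω h =>
      le_trans h (hg hmn)
    rw [hmonoS.measure_iUnion]
    exact iSup_le fun n => hkey _ (hgt n)
  set A := {x : ℝ | F x ≤ t} with hA
  have hAlow : ∀ a b : ℝ, b ≤ a → a ∈ A → b ∈ A := fun a b hba ha =>
    le_trans (hmono hba) ha
  rcases A.eq_empty_or_nonempty with hAe | hAne
  · have : {ω | F (W ω) ≤ t} = ∅ := by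
      ext ω; simp only [Set.mem_setOf_eq, Set.mem_empty_iff_false, iff_false]
      intro h
      exact absurd (by exact h : W ω ∈ A) (by simp [hAe])
    simp [this]
  by_cases hbdd : BddAbove A
  · set s := sSup A with hs
    by_cases hsA : s ∈ A
    · refine le_trans (measure_mono fun ω h => ?_) (hkey s hsA)
      exact le_csSup hbdd h
    · have hsub : {ω | F (W ω) ≤ t} ⊆ ⋃ n : ℕ, {ω | W ω ≤ s - ((n : ℝ) + 1)⁻¹} := by
        intro ω h
        have h1 : W ω ≤ s := le_csSup hbdd h
        have h3 : W ω < s := lt_of_le_of_ne h1 (fun e => hsA (e ▸ h))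
        obtain ⟨n, hn⟩ := exists_nat_gt (s - W ω)⁻¹
        refine Set.mem_iUnion.mpr ⟨n, ?_⟩
        have hpos : 0 < s - W ω := by linarith
        have h4 : ((n : ℝ) + 1)⁻¹ ≤ s - W ω := by
          rw [inv_le_comm₀ (by positivity) hpos]
          exact le_trans hn.le (by linarith)
        simp only [Set.mem_setOf_eq]; linarith
      refine le_trans (measure_mono hsub) (hUnion _ ?_ ?_)
      · intro m n hmn
        have : ((m : ℝ) + 1)⁻¹ ≥ ((n : ℝ) + 1)⁻¹ := by
          apply inv_anti₀ (by positivity)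
          have : (m:ℝ) ≤ n := Nat.cast_le.mpr hmn
          linarith
        linarith
      · intro n
        have hlt : s - ((n : ℝ) + 1)⁻¹ < s := by
          have : (0:ℝ) < ((n : ℝ) + 1)⁻¹ := by positivity
          linarith
        obtain ⟨a, haA, hla⟩ := exists_lt_of_lt_csSup hAne hlt
        exact hAlow a _ hla.le haA
  · -- A unbounded above: F ≤ t everywhere
    have hall : ∀ x : ℝ, F x ≤ t := by
      intro x
      obtain ⟨a, haA, hax⟩ := not_bddAbove_iff.mp hbdd x
      exact hAlow a x hax.le haA
    have huniv : (Set.univ : Set Ω) = ⋃ n : ℕ, {ω | W ω ≤ (n : ℝ)} := by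
      ext ω; simp only [Set.mem_univ, true_iff, Set.mem_iUnion, Set.mem_setOf_eq]
      obtain ⟨n, hn⟩ := exists_nat_gt (W ω)
      exact ⟨n, hn.le⟩
    refine le_trans (measure_mono (Set.subset_univ _)) ?_
    rw [huniv]
    exact hUnion (fun n => (n:ℝ)) (fun m n hmn => by simpa using (Nat.cast_le.mpr hmn : (m:ℝ) ≤ n)) fun n => hall _

-- Lower bound: δ - γ' ≤ (μ {ω | F (W ω) ≤ δ}).toReal provided ∃ x, δ < F x
lemma aux_lower {Ω : Type*} [MeasurableSpace Ω] (μ : Measure Ω) [IsProbabilityMeasure μ]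
    (W : Ω → ℝ) (hW : Measurable W) (F : ℝ → ℝ)
    (hF : ∀ w, F w = (μ {ω | W ω ≤ w}).toReal)
    (γ' : ℝ) (hγ' : ∀ w : ℝ, (μ {ω | W ω = w}).toReal ≤ γ')
    (δ : ℝ) (hδ : 0 < δ) (hex : ∃ x : ℝ, δ < F x) :
    δ - γ' ≤ (μ {ω | F (W ω) ≤ δ}).toReal := by
  have hmono : Monotone F := fun a b hab => by
    rw [hF, hF]
    exact ENNReal.toReal_mono (measure_ne_top _ _)
      (measure_mono fun ω h => le_trans h hab)
  set S := {x : ℝ | δ < F x} with hSdef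
  have hSne : S.Nonempty := hex
  -- find a point where F ≤ δ  (needed for bddBelow)
  have hlow : ∃ x : ℝ, F x ≤ δ := by
    have hanti : Antitone (fun n : ℕ => {ω | W ω ≤ -(n : ℝ)}) := by
      intro m n hmn ω h
      simp only [Set.mem_setOf_eq] at h ⊢
      have : (m : ℝ) ≤ n := Nat.cast_le.mpr hmn
      linarith
    have hInter : (⋂ n : ℕ, {ω | W ω ≤ -(n : ℝ)}) = ∅ := by
      ext ω
      simp only [Set.mem_iInter, Set.mem_setOf_eq, Set.mem_empty_iff_false, iff_false,
        not_forall, not_le]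
      obtain ⟨n, hn⟩ := exists_nat_gt (-(W ω))
      exact ⟨n, by linarith⟩
    have hmi := hanti.measure_iInter (μ := μ)
      (fun n => (hW measurableSet_Iic).nullMeasurableSet) ⟨0, measure_ne_top _ _⟩
    rw [hInter, measure_empty] at hmi
    have hlt : ⨅ n : ℕ, μ {ω | W ω ≤ -(n : ℝ)} < ENNReal.ofReal δ := by
      rw [← hmi]
      simpa using hδ
    obtain ⟨n, hn⟩ := iInf_lt_iff.mp hlt
    refine ⟨-(n : ℝ), ?_⟩
    rw [hF]
    exact le_of_lt (ENNReal.toReal_lt_of_lt_ofReal hn)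
  obtain ⟨x₀, hx₀⟩ := hlow
  have hbdd : BddBelow S := by
    refine ⟨x₀, fun y hy => ?_⟩
    by_contra hc
    push_neg at hc
    exact absurd (le_trans (hmono hc.le) hx₀) (not_le.mpr hy)
  set s := sInf S with hs
  have h5 : {ω | W ω < s} ⊆ {ω | F (W ω) ≤ δ} := by
    intro ω h
    simp only [Set.mem_setOf_eq] at h ⊢
    by_contra hc
    push_neg at hc
    exact absurd (csInf_le hbdd hc) (not_le.mpr h)
  have h6 : δ ≤ F s := by
    have hanti : Antitone (fun n : ℕ => {ω | W ω ≤ s + ((n : ℝ) + 1)⁻¹}) := by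
      intro m n hmn ω h
      simp only [Set.mem_setOf_eq] at h ⊢
      have h1 : ((n : ℝ) + 1)⁻¹ ≤ ((m : ℝ) + 1)⁻¹ := by
        apply inv_anti₀ (by positivity)
        have : (m : ℝ) ≤ n := Nat.cast_le.mpr hmn
        linarith
      linarith
    have hIi : {ω | W ω ≤ s} = ⋂ n : ℕ, {ω | W ω ≤ s + ((n : ℝ) + 1)⁻¹} := by
      ext ω
      simp only [Set.mem_iInter, Set.mem_setOf_eq]
      constructor
      · intro h n
        have : (0 : ℝ) < ((n : ℝ) + 1)⁻¹ := by positivity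
        linarith
      · intro h
        by_contra hc
        push_neg at hc
        obtain ⟨n, hn⟩ := exists_nat_gt (W ω - s)⁻¹
        have hpos : 0 < W ω - s := by linarith
        have h4 : ((n : ℝ) + 1)⁻¹ < W ω - s := by
          rw [inv_lt_comm₀ (by positivity) hpos]
          exact lt_of_lt_of_le hn (by linarith)
        exact absurd (h n) (by push_neg; linarith)
    have hmi := hanti.measure_iInter (μ := μ)
      (fun n => (hW measurableSet_Iic).nullMeasurableSet) ⟨0, measure_ne_top _ _⟩
    have hge : ENNReal.ofReal δ ≤ μ {ω | W ω ≤ s} := by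
      rw [hIi, hmi]
      refine le_iInf fun n => ?_
      rw [ENNReal.ofReal_le_iff_le_toReal (measure_ne_top _ _)]
      have hlt' : s < s + ((n : ℝ) + 1)⁻¹ := by
        have : (0 : ℝ) < ((n : ℝ) + 1)⁻¹ := by positivity
        linarith
      obtain ⟨y, hyS, hy⟩ := exists_lt_of_csInf_lt hSne hlt'
      have : δ < F y := hyS
      calc δ ≤ F y := this.le
        _ ≤ F (s + ((n : ℝ) + 1)⁻¹) := hmono hy.le
        _ = _ := hF _
    rw [hF]
    exact (ENNReal.ofReal_le_iff_le_toReal (measure_ne_top _ _)).mp hge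
  have hsplit : {ω | W ω ≤ s} = {ω | W ω < s} ∪ {ω | W ω = s} := by
    ext ω
    simp only [Set.mem_setOf_eq, Set.mem_union]
    exact ⟨fun h => lt_or_eq_of_le h, fun h => h.elim le_of_lt le_of_eq⟩
  have hdisj : Disjoint {ω | W ω < s} {ω | W ω = s} := by
    rw [Set.disjoint_left]
    intro ω h1 h2
    simp only [Set.mem_setOf_eq] at h1 h2
    exact absurd h2 (ne_of_lt h1)
  have hm2 : MeasurableSet {ω | W ω = s} := hW (measurableSet_singleton s)
  have hadd : μ {ω | W ω ≤ s} = μ {ω | W ω < s} + μ {ω | W ω = s} := by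
    rw [hsplit, measure_union hdisj hm2]
  have haddR : F s = (μ {ω | W ω < s}).toReal + (μ {ω | W ω = s}).toReal := by
    rw [hF, hadd, ENNReal.toReal_add (measure_ne_top _ _) (measure_ne_top _ _)]
  have hfin : (μ {ω | W ω < s}).toReal ≤ (μ {ω | F (W ω) ≤ δ}).toReal :=
    ENNReal.toReal_mono (measure_ne_top _ _) (measure_mono h5)
  have := hγ' s
  linarith

/-- For a discrete real random variable `W` with `α = P[W < 0]` and `γ = AC(W)`,
for any `δ > 0`, `P[F(|W|) ≤ δ and F(W) > δ] ≤ 2α + γ`. -/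
theorem stmt_2 {Ω : Type*} [MeasurableSpace Ω] (μ : Measure Ω) [IsProbabilityMeasure μ]
    (W : Ω → ℝ) (hW : Measurable W) (hdisc : (Set.range W).Countable)
    (F Fabs : ℝ → ℝ)
    (hF : ∀ w, F w = (μ {ω | W ω ≤ w}).toReal)
    (hFabs : ∀ w, Fabs w = (μ {ω | |W ω| ≤ w}).toReal)
    (α γ : ℝ)
    (hα : α = (μ {ω | W ω < 0}).toReal)
    (hγ : γ = ⨆ w : ℝ, (μ {ω | W ω = w}).toReal)
    (δ : ℝ) (hδ : 0 < δ) :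
    (μ {ω | Fabs |W ω| ≤ δ ∧ δ < F (W ω)}).toReal ≤ 2 * α + γ := by
  have hmono : Monotone F := fun a b hab => by
    rw [hF, hF]
    exact ENNReal.toReal_mono (measure_ne_top _ _)
      (measure_mono fun ω h => le_trans h hab)
  have hα0 : 0 ≤ α := hα ▸ ENNReal.toReal_nonneg
  have hγ0 : 0 ≤ γ := hγ ▸ Real.iSup_nonneg fun w => ENNReal.toReal_nonneg
  have hγw : ∀ w : ℝ, (μ {ω | W ω = w}).toReal ≤ γ := by
    intro w
    rw [hγ]
    have hb : BddAbove (Set.range fun w : ℝ => (μ {ω | W ω = w}).toReal) := by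
      refine ⟨1, ?_⟩
      rintro x ⟨v, rfl⟩
      have h1 : μ {ω | W ω = v} ≤ 1 := prob_le_one
      simpa using ENNReal.toReal_mono ENNReal.one_ne_top h1
    exact le_ciSup hb w
  by_cases hex : ∃ x : ℝ, δ < F x
  swap
  · push_neg at hex
    have hE : {ω | Fabs |W ω| ≤ δ ∧ δ < F (W ω)} = ∅ := by
      ext ω
      simp only [Set.mem_setOf_eq, Set.mem_empty_iff_false, iff_false, not_and, not_lt]
      intro _
      exact hex _
    rw [hE]
    simp only [measure_empty, ENNReal.toReal_zero]
    linarith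
  -- main case
  set B₁ := {ω | F (W ω) ≤ δ} with hB₁
  set B₂ := {ω | F (W ω) ≤ δ + α} with hB₂
  set N := {ω | W ω < 0} with hN
  have hFab : ∀ w : ℝ, 0 ≤ w → F w ≤ Fabs w + α := by
    intro w hw
    have hsub : {ω | W ω ≤ w} ⊆ {ω | |W ω| ≤ w} ∪ N := by
      intro ω h
      simp only [Set.mem_setOf_eq, Set.mem_union, hN]
      by_cases hc : W ω < 0
      · exact Or.inr hc
      · push_neg at hc
        exact Or.inl (abs_le.mpr ⟨by linarith, h⟩)
    have h1 : μ {ω | W ω ≤ w} ≤ μ {ω | |W ω| ≤ w} + μ N :=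
      le_trans (measure_mono hsub) (measure_union_le _ _)
    have h2 := ENNReal.toReal_mono
      (ENNReal.add_ne_top.mpr ⟨measure_ne_top _ _, measure_ne_top _ _⟩) h1
    rw [ENNReal.toReal_add (measure_ne_top _ _) (measure_ne_top _ _)] at h2
    rw [hF, hFabs, hα]
    exact h2
  have hB₁m : MeasurableSet B₁ := by
    have hoc : Set.OrdConnected {x : ℝ | F x ≤ δ} :=
      ⟨fun a _ b hb x hx => le_trans (hmono hx.2) hb⟩
    exact hW hoc.measurableSet
  have hB12 : B₁ ⊆ B₂ := by
    intro ω h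
    simp only [hB₁, Set.mem_setOf_eq] at h
    simp only [hB₂, Set.mem_setOf_eq]
    linarith
  have hEsub : {ω | Fabs |W ω| ≤ δ ∧ δ < F (W ω)} ⊆ N ∪ (B₂ \ B₁) := by
    rintro ω ⟨h1, h2⟩
    by_cases hc : W ω < 0
    · exact Or.inl hc
    · push_neg at hc
      refine Or.inr ⟨?_, not_le.mpr h2⟩
      have habs : |W ω| = W ω := abs_of_nonneg hc
      have := hFab (W ω) hc
      simp only [hB₂, Set.mem_setOf_eq]
      rw [habs] at h1
      linarith
  have hstep1 : (μ {ω | Fabs |W ω| ≤ δ ∧ δ < F (W ω)}).toReal ≤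
      (μ N).toReal + (μ (B₂ \ B₁)).toReal := by
    have h1 : μ {ω | Fabs |W ω| ≤ δ ∧ δ < F (W ω)} ≤ μ N + μ (B₂ \ B₁) :=
      le_trans (measure_mono hEsub) (measure_union_le _ _)
    have h2 := ENNReal.toReal_mono
      (ENNReal.add_ne_top.mpr ⟨measure_ne_top _ _, measure_ne_top _ _⟩) h1
    rwa [ENNReal.toReal_add (measure_ne_top _ _) (measure_ne_top _ _)] at h2
  have hdiff : (μ (B₂ \ B₁)).toReal = (μ B₂).toReal - (μ B₁).toReal := by
    rw [measure_diff hB12 hB₁m.nullMeasurableSet (measure_ne_top _ _),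
      ENNReal.toReal_sub_of_le (measure_mono hB12) (measure_ne_top _ _)]
  have hup : (μ B₂).toReal ≤ δ + α :=
    ENNReal.toReal_le_of_le_ofReal (by linarith)
      (aux_upper μ W F hF (δ + α) (by linarith))
  have hlo : δ - γ ≤ (μ B₁).toReal := aux_lower μ W hW F hF γ hγw δ hδ hex
  have hNα : (μ N).toReal = α := hα.symm
  linarith
end

section
/- Let W be a discrete real random variable with α = P[W < 0]. Then for any δ > 0, P[F(W) ≤ δ and F(|W|) > δ] ≤ α, where F(W) is the CDF of W at W and F(|W|) the CDF of |W| at |W|. -/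
open MeasureTheory

/-- For a discrete real random variable `W` with `α = P[W < 0]`,
for any `δ > 0`, `P[F(W) ≤ δ and F(|W|) > δ] ≤ α`. -/
theorem stmt_3 {Ω : Type*} [MeasurableSpace Ω] (μ : Measure Ω) [IsProbabilityMeasure μ]
    (W : Ω → ℝ) (hW : Measurable W) (hdisc : (Set.range W).Countable)
    (F Fabs : ℝ → ℝ)
    (hF : ∀ w, F w = (μ {ω | W ω ≤ w}).toReal)
    (hFabs : ∀ w, Fabs w = (μ {ω | |W ω| ≤ w}).toReal)
    (α : ℝ) (hα : α = (μ {ω | W ω < 0}).toReal)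
    (δ : ℝ) (hδ : 0 < δ) :
    (μ {ω | F (W ω) ≤ δ ∧ δ < Fabs |W ω|}).toReal ≤ α := by
  rw [hα]
  have hsub : {ω | F (W ω) ≤ δ ∧ δ < Fabs |W ω|} ⊆ {ω | W ω < 0} := by
    rintro ω ⟨h1, h2⟩
    by_contra h
    simp only [Set.mem_setOf_eq, not_lt] at h
    have habs : |W ω| = W ω := abs_of_nonneg h
    rw [habs, hFabs] at h2
    rw [hF] at h1
    have hm : μ {ω' | |W ω'| ≤ W ω} ≤ μ {ω' | W ω' ≤ W ω} :=
      measure_mono fun ω' hh => le_trans (le_abs_self _) (Set.mem_setOf_eq ▸ hh)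
    have := ENNReal.toReal_mono (measure_ne_top μ _) hm
    linarith
  exact ENNReal.toReal_mono (measure_ne_top μ _) (measure_mono hsub)
end

section
/- Let W be a discrete real random variable, α = P[W < 0], γ = AC(W). For any event E and any δ > 2γ, P[E | F(|W|) ≤ δ] ≥ P[E | F(W) ≤ δ] · 1/(1 + (2α+γ)/(δ−γ)) − α/(δ−γ). -/
/-!
Write `A = {F(W) ≤ δ}` and `B = {F(|W|) ≤ δ}`. On `{W ≥ 0}` we have `F(|W|) ≤ F(W)`, so
`A ⊆ B ∪ {W < 0}` and `P(A ∩ E) ≤ P(B ∩ E) + α`. The probability integral transform gives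
`P(B) ≤ δ`. For `δ < 1`, right continuity gives `F(q) ≥ δ` at the quantile
`q = sup {x | F x ≤ δ}`, so `P(A) ≥ P(W < q) = F(q) - P(W = q) ≥ δ - γ`; for `δ ≥ 1` both events
are the whole space. Hence
`P(E | A) (δ - γ) / (δ + 2α) - α / (δ - γ) ≤ (P(A ∩ E) - α) / (δ + 2α) ≤ P(B ∩ E) / P(B)`.
-/

open MeasureTheory ProbabilityTheory Filter Topology Set

namespace ProbabilityTheory

section Quantile

variable (ν : Measure ℝ) {δ : ℝ}

lemma measurableSet_cdf_le (δ : ℝ) : MeasurableSet {x | cdf ν x ≤ δ} :=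
  (monotone_cdf ν).measurable measurableSet_Iic

lemma bddAbove_setOf_cdf_le (hδ : δ < 1) : BddAbove {x | cdf ν x ≤ δ} := by
  obtain ⟨b, hb⟩ := ((tendsto_cdf_atTop ν).eventually (lt_mem_nhds hδ)).exists_forall_of_atTop
  exact ⟨b, fun x hx => le_of_not_gt fun hbx => (hb x hbx.le).not_ge hx⟩

lemma cdf_le_of_lt_sSup_setOf_cdf_le {x : ℝ} (hne : {x | cdf ν x ≤ δ}.Nonempty)
    (hx : x < sSup {x | cdf ν x ≤ δ}) : cdf ν x ≤ δ := by
  obtain ⟨y, hy, hxy⟩ := exists_lt_of_lt_csSup hne hx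
  exact (monotone_cdf ν hxy.le).trans hy

lemma le_cdf_sSup_setOf_cdf_le (hδ : δ < 1) : δ ≤ cdf ν (sSup {x | cdf ν x ≤ δ}) := by
  refine ge_of_tendsto ((cdf ν).right_continuous _ |>.mono Ioi_subset_Ici_self)
    (eventually_nhdsWithin_of_forall fun y hy => ?_)
  exact le_of_not_ge fun hyδ => (le_csSup (bddAbove_setOf_cdf_le ν hδ) hyδ).not_gt hy

variable [IsProbabilityMeasure ν]

lemma measure_setOf_cdf_le_le (δ : ℝ) : ν {x | cdf ν x ≤ δ} ≤ ENNReal.ofReal δ := by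
  rcases le_or_gt 1 δ with hδ1 | hδ1
  · exact prob_le_one.trans (by simpa using ENNReal.ofReal_le_ofReal hδ1)
  set U := {x | cdf ν x ≤ δ}
  rcases U.eq_empty_or_nonempty with hU | hne
  · simp [hU]
  set q := sSup U
  have hUq : U ⊆ Iic q := fun x hx => le_csSup (bddAbove_setOf_cdf_le ν hδ1) hx
  by_cases hq : cdf ν q ≤ δ
  · calc ν U ≤ ν (Iic q) := measure_mono hUq
      _ = ENNReal.ofReal (cdf ν q) := (ofReal_cdf ν q).symm
      _ ≤ ENNReal.ofReal δ := ENNReal.ofReal_le_ofReal hq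
  · have hUq' : U ⊆ Iio q := fun x hx =>
      (show x ≤ q from hUq hx).lt_of_ne fun h => hq (h ▸ hx)
    have hlim : Function.leftLim (cdf ν) q ≤ δ :=
      le_of_tendsto ((monotone_cdf ν).tendsto_leftLim q)
        (eventually_nhdsWithin_of_forall fun x hx => cdf_le_of_lt_sSup_setOf_cdf_le ν hne hx)
    calc ν U ≤ ν (Iio q) := measure_mono hUq'
      _ = ENNReal.ofReal (Function.leftLim (cdf ν) q) := by
        conv_lhs => rw [← measure_cdf (μ := ν)]
        rw [(cdf ν).measure_Iio (tendsto_cdf_atBot ν), sub_zero]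
      _ ≤ ENNReal.ofReal δ := ENNReal.ofReal_le_ofReal hlim

lemma sub_le_measureReal_setOf_cdf_le {g : ℝ} (hδ0 : 0 < δ) (hδ1 : δ < 1)
    (hg : ∀ x, ν.real {x} ≤ g) : δ - g ≤ ν.real {x | cdf ν x ≤ δ} := by
  set U := {x | cdf ν x ≤ δ}
  have hne : U.Nonempty :=
    ((tendsto_cdf_atBot ν).eventually (gt_mem_nhds hδ0)).exists.imp fun _ => le_of_lt
  set q := sSup U
  calc δ - g ≤ cdf ν q - ν.real {q} := sub_le_sub (le_cdf_sSup_setOf_cdf_le ν hδ1) (hg q)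
    _ = ν.real (Iio q) := by
      rw [cdf_eq_real, ← Iic_sdiff_right, measureReal_sdiff (by simp) (measurableSet_singleton q)]
    _ ≤ ν.real U :=
      measureReal_mono fun x hx => cdf_le_of_lt_sSup_setOf_cdf_le ν hne hx

end Quantile

section RandomVariable

variable {Ω : Type*} [MeasurableSpace Ω] {μ : Measure Ω} [IsProbabilityMeasure μ] {X : Ω → ℝ}
  {δ : ℝ}

lemma cdf_map_apply (hX : Measurable X) (x : ℝ) : cdf (μ.map X) x = μ.real {ω | X ω ≤ x} := by
  have := Measure.isProbabilityMeasure_map (μ := μ) hX.aemeasurable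
  rw [cdf_eq_real, map_measureReal_apply hX measurableSet_Iic]
  rfl

lemma cdf_map_abs_le (hX : Measurable X) (x : ℝ) :
    cdf (μ.map fun ω => |X ω|) x ≤ cdf (μ.map X) x := by
  rw [cdf_map_apply hX.abs, cdf_map_apply hX]
  exact measureReal_mono fun ω hω => (le_abs_self (X ω)).trans hω

lemma setOf_cdf_map_comp_le_subset (hX : Measurable X) :
    {ω | cdf (μ.map X) (X ω) ≤ δ} ⊆
      {ω | cdf (μ.map fun ω => |X ω|) |X ω| ≤ δ} ∪ {ω | X ω < 0} := by
  intro ω hω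
  rcases lt_or_ge (X ω) 0 with hneg | hnonneg
  · exact Or.inr hneg
  · refine Or.inl ?_
    show cdf _ |X ω| ≤ δ
    rw [abs_of_nonneg hnonneg]
    exact (cdf_map_abs_le hX _).trans hω

lemma measureReal_cdf_map_comp_le (hX : Measurable X) (hδ : 0 ≤ δ) :
    μ.real {ω | cdf (μ.map X) (X ω) ≤ δ} ≤ δ := by
  have := Measure.isProbabilityMeasure_map (μ := μ) hX.aemeasurable
  change μ.real (X ⁻¹' {x | cdf (μ.map X) x ≤ δ}) ≤ δ
  rw [← map_measureReal_apply hX (measurableSet_cdf_le _ δ)]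
  exact ENNReal.toReal_le_of_le_ofReal hδ (measure_setOf_cdf_le_le _ δ)

lemma sub_le_measureReal_cdf_map_comp_le {g : ℝ} (hX : Measurable X) (hδ0 : 0 < δ) (hδ1 : δ < 1)
    (hg : ∀ x, μ.real {ω | X ω = x} ≤ g) :
    δ - g ≤ μ.real {ω | cdf (μ.map X) (X ω) ≤ δ} := by
  have := Measure.isProbabilityMeasure_map (μ := μ) hX.aemeasurable
  change δ - g ≤ μ.real (X ⁻¹' {x | cdf (μ.map X) x ≤ δ})
  rw [← map_measureReal_apply hX (measurableSet_cdf_le _ δ)]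
  refine sub_le_measureReal_setOf_cdf_le _ hδ0 hδ1 fun x => ?_
  rw [map_measureReal_apply hX (measurableSet_singleton x)]
  exact hg x

end RandomVariable

section Conditioning

variable {Ω : Type*} [MeasurableSpace Ω] {μ : Measure Ω}

lemma toReal_cond_apply {s : Set Ω} (hs : MeasurableSet s) (t : Set Ω) :
    (μ[t|s]).toReal = μ.real (s ∩ t) / μ.real s := by
  rw [cond_apply hs, ENNReal.toReal_mul, ENNReal.toReal_inv, inv_mul_eq_div]
  rfl

lemma le_toReal_cond_of_subset_union [IsFiniteMeasure μ] {A B N : Set Ω} (hA : MeasurableSet A)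
    (hB : MeasurableSet B) (hAB : A ⊆ B ∪ N) (E : Set Ω) {γ δ : ℝ} (hγ : 0 ≤ γ) (hγδ : γ < δ)
    (hA_ge : δ - γ ≤ μ.real A) (hB_le : μ.real B ≤ δ) :
    μ[E|A].toReal * (1 / (1 + (2 * μ.real N + γ) / (δ - γ))) - μ.real N / (δ - γ) ≤
      μ[E|B].toReal := by
  set n := μ.real N
  have hn : 0 ≤ n := measureReal_nonneg
  have hδγ : 0 < δ - γ := sub_pos.2 hγδ
  have hAE : μ.real (A ∩ E) ≤ μ.real (B ∩ E) + n := by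
    refine (measureReal_mono fun ω (hω : ω ∈ A ∩ E) => ?_).trans (measureReal_union_le _ _)
    exact (hAB hω.1).imp (fun hωB => ⟨hωB, hω.2⟩) id
  have hδn : 0 < δ + 2 * n := by linarith
  have hfactor : 1 / (1 + (2 * n + γ) / (δ - γ)) = (δ - γ) / (δ + 2 * n) := by
    field_simp
    ring
  rw [toReal_cond_apply hA, toReal_cond_apply hB, hfactor]
  calc μ.real (A ∩ E) / μ.real A * ((δ - γ) / (δ + 2 * n)) - n / (δ - γ)
      ≤ μ.real (A ∩ E) / (δ + 2 * n) - n / (δ + 2 * n) := by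
        have hcond : μ.real (A ∩ E) / μ.real A * (δ - γ) ≤ μ.real (A ∩ E) :=
          calc _ ≤ μ.real (A ∩ E) / μ.real A * μ.real A := by gcongr
            _ = μ.real (A ∩ E) := div_mul_cancel₀ _ (hδγ.trans_le hA_ge).ne'
        rw [← mul_div_assoc]
        gcongr ?_ / _ - n / ?_
        linarith
    _ = (μ.real (A ∩ E) - n) / (δ + 2 * n) := by ring
    _ ≤ μ.real (B ∩ E) / μ.real B := by
        rcases le_or_gt (μ.real (A ∩ E)) n with hle | hlt
        · exact (div_nonpos_of_nonpos_of_nonneg (by linarith) hδn.le).trans (by positivity)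
        · have hB_pos : 0 < μ.real B :=
            (by linarith : 0 < μ.real (B ∩ E)).trans_le (measureReal_mono inter_subset_left)
          calc (μ.real (A ∩ E) - n) / (δ + 2 * n) ≤ (μ.real (A ∩ E) - n) / μ.real B := by
                gcongr
                linarith
            _ ≤ μ.real (B ∩ E) / μ.real B := by gcongr; linarith

end Conditioning

end ProbabilityTheory

theorem stmt_4_general {Ω : Type*} [MeasurableSpace Ω] (μ : Measure Ω) [IsProbabilityMeasure μ]
    (W : Ω → ℝ) (hW : Measurable W)
    (F Fabs : ℝ → ℝ)
    (hF : ∀ w, F w = (μ {ω | W ω ≤ w}).toReal)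
    (hFabs : ∀ w, Fabs w = (μ {ω | |W ω| ≤ w}).toReal)
    (α γ : ℝ)
    (hα : α = (μ {ω | W ω < 0}).toReal)
    (hγ : γ = ⨆ w : ℝ, (μ {ω | W ω = w}).toReal)
    (E : Set Ω)
    (δ : ℝ) (hδ : 2 * γ < δ) :
    (ProbabilityTheory.cond μ {ω | Fabs |W ω| ≤ δ} E).toReal ≥
      (ProbabilityTheory.cond μ {ω | F (W ω) ≤ δ} E).toReal *
        (1 / (1 + (2 * α + γ) / (δ - γ))) - α / (δ - γ) := by
  obtain rfl : F = cdf (μ.map W) := funext fun w => (hF w).trans (cdf_map_apply hW w).symm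
  obtain rfl : Fabs = cdf (μ.map fun ω => |W ω|) :=
    funext fun w => (hFabs w).trans (cdf_map_apply hW.abs w).symm
  subst hα
  have hatom (w : ℝ) : μ.real {ω | W ω = w} ≤ γ := by
    rw [hγ]
    exact le_ciSup (f := fun w => μ.real {ω | W ω = w})
      ⟨1, forall_mem_range.2 fun _ => measureReal_le_one⟩ w
  have hγ0 : 0 ≤ γ := hγ ▸ Real.iSup_nonneg fun _ => measureReal_nonneg
  rcases lt_or_ge δ 1 with hδ1 | hδ1
  · exact le_toReal_cond_of_subset_union (hW (measurableSet_cdf_le _ δ))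
      (hW.abs (measurableSet_cdf_le _ δ)) (setOf_cdf_map_comp_le_subset hW) E hγ0 (by linarith)
      (sub_le_measureReal_cdf_map_comp_le hW (by linarith) hδ1 hatom)
      (measureReal_cdf_map_comp_le hW.abs (by linarith))
  · have huniv (X : Ω → ℝ) : {ω | cdf (μ.map X) (X ω) ≤ δ} = univ :=
      eq_univ_of_forall fun ω => (cdf_le_one _ _).trans hδ1
    rw [huniv, huniv, cond_univ]
    have hδγ : 0 < δ - γ := by linarith
    have hfactor : 1 / (1 + (2 * (μ {ω | W ω < 0}).toReal + γ) / (δ - γ)) ≤ 1 :=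
      div_le_one_of_le₀ (le_add_of_nonneg_right (by positivity)) (by positivity)
    have hpenalty : 0 ≤ (μ {ω | W ω < 0}).toReal / (δ - γ) := by positivity
    linarith [mul_le_of_le_one_right (ENNReal.toReal_nonneg (a := μ E)) hfactor]

/-- Conditional comparison lemma: for a discrete real random variable `W` with
`α = P[W < 0]`, `γ = AC(W)`, any measurable event `E` and any `δ > 2γ`,
`P[E | F(|W|) ≤ δ] ≥ P[E | F(W) ≤ δ] · 1/(1 + (2α+γ)/(δ−γ)) − α/(δ−γ)`. -/
theorem stmt_4 {Ω : Type*} [MeasurableSpace Ω] (μ : Measure Ω) [IsProbabilityMeasure μ]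
    (W : Ω → ℝ) (hW : Measurable W) (hdisc : (Set.range W).Countable)
    (F Fabs : ℝ → ℝ)
    (hF : ∀ w, F w = (μ {ω | W ω ≤ w}).toReal)
    (hFabs : ∀ w, Fabs w = (μ {ω | |W ω| ≤ w}).toReal)
    (α γ : ℝ)
    (hα : α = (μ {ω | W ω < 0}).toReal)
    (hγ : γ = ⨆ w : ℝ, (μ {ω | W ω = w}).toReal)
    (E : Set Ω) (hE : MeasurableSet E)
    (δ : ℝ) (hδ : 2 * γ < δ)
    (hpos1 : μ {ω | Fabs |W ω| ≤ δ} ≠ 0)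
    (hpos2 : μ {ω | F (W ω) ≤ δ} ≠ 0) :
    (ProbabilityTheory.cond μ {ω | Fabs |W ω| ≤ δ} E).toReal ≥
      (ProbabilityTheory.cond μ {ω | F (W ω) ≤ δ} E).toReal *
        (1 / (1 + (2 * α + γ) / (δ - γ))) - α / (δ - γ) :=
  stmt_4_general μ W hW F Fabs hF hFabs α γ hα hγ E δ hδ
end

section
/- For the distribution D_{p,p'}^η (Z uniform on {−1,1}, X_i independent ±1 with P[X_i=1|Z=1]=p_i, P[X_i=1|Z=−1]=p_i', Y = Z flipped with probability η), the minimizer β* = (β_0, β_1, …, β_n) of E[(β_0 + Σ_i β_i X_i − Y)²] satisfies β_i = k(1−2η)(p_i − p_i') / (1 − ½(2p_i−1)² − ½(2p_i'−1)²) for i = 1,…,n, where k = 1 / (1 + Σ_{i=1}^n (p_i−p_i')² / (1 − ½(2p_i−1)² − ½(2p_i'−1)²)) > 0, and β_0 + Σ_{i=1}^n (p_i + p_i' − 1) β_i = 0. -/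
open MeasureTheory ProbabilityTheory

/-- The real value `±1` encoded by a Boolean. -/
noncomputable def pmOne (b : Bool) : ℝ := if b then 1 else -1

/-- Mass function of `n` independent `±1` features, where feature `i` equals `1`
(i.e. `true`) with probability `p i`. -/
noncomputable def bpMass {n : ℕ} (p : Fin n → ℝ) (x : Fin n → Bool) : ℝ :=
  ∏ i, if x i then p i else 1 - p i

/-- The distribution `B_p` of `n` independent `±1` features with `P[X_i = 1] = p i`. -/
noncomputable def bpMeasure {n : ℕ} (p : Fin n → ℝ) : Measure (Fin n → Bool) :=
  ∑ x : Fin n → Bool, ENNReal.ofReal (bpMass p x) • Measure.dirac x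

/-- Mass function of the toy distribution `D_{p,p'}^η` on triples `ω = (x, y, z)`:
`z` is uniform on `{−1,1}`; given `z = 1` the features are `B_p`-distributed, given
`z = −1` they are `B_{p'}`-distributed; `y = z` with probability `1−η`, else `y = −z`. -/
noncomputable def toyMass {n : ℕ} (p p' : Fin n → ℝ) (η : ℝ)
    (ω : (Fin n → Bool) × Bool × Bool) : ℝ :=
  (1/2) * bpMass (if ω.2.2 then p else p') ω.1 * (if ω.2.1 = ω.2.2 then 1 - η else η)

/-- The toy distribution `D_{p,p'}^η` as a measure on `(x, y, z)` triples. -/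
noncomputable def toyMeasure {n : ℕ} (p p' : Fin n → ℝ) (η : ℝ) :
    Measure ((Fin n → Bool) × Bool × Bool) :=
  ∑ ω : (Fin n → Bool) × Bool × Bool, ENNReal.ofReal (toyMass p p' η ω) • Measure.dirac ω

/-- The squared risk `E[(β₀ + Σ βᵢ Xᵢ − Y)²]` of a linear predictor against the noisy
label `Y`, under `D_{p,p'}^η`. -/
noncomputable def toyRisk {n : ℕ} (p p' : Fin n → ℝ) (η : ℝ) (β0 : ℝ) (β : Fin n → ℝ) : ℝ :=
  ∫ ω, (β0 + ∑ i, β i * pmOne (ω.1 i) - pmOne ω.2.1)^2 ∂(toyMeasure p p' η)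

/-- The normalizing constant `k(p, p')` from the explicit risk-minimizing solution. -/
noncomputable def kConst {n : ℕ} (p p' : Fin n → ℝ) : ℝ :=
  1 / (1 + ∑ i, (p i - p' i)^2 /
    (1 - (1/2) * (2 * p i - 1)^2 - (1/2) * (2 * p' i - 1)^2))

/- ### Auxiliary lemmas -/

lemma quad_nonneg_linear_zero (a b : ℝ) (ha : 0 ≤ a)
    (h : ∀ t : ℝ, 0 ≤ a * t^2 + b * t) : b = 0 := by
  by_contra hb
  have hc : (0:ℝ) < a + 1 := by linarith
  have h1 := h (-b / (a + 1))
  have hid : a * (-b / (a+1))^2 + b * (-b / (a+1)) = (a * b^2 - b^2 * (a+1)) / (a+1)^2 := by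
    field_simp
    ring
  rw [hid] at h1
  have h2 : 0 ≤ a * b^2 - b^2 * (a+1) := by
    by_contra h3
    push_neg at h3
    have := div_neg_of_neg_of_pos h3 (by positivity : (0:ℝ) < (a+1)^2)
    linarith
  have hb2 : 0 < b^2 := by positivity
  nlinarith

lemma sum_pi_bool {n : ℕ} (g : Fin n → Bool → ℝ) :
    ∑ x : Fin n → Bool, ∏ i, g i (x i) = ∏ i, (g i true + g i false) := by
  have h := Finset.prod_univ_sum (fun _ : Fin n => (Finset.univ : Finset Bool)) (fun i b => g i b)
  simp only [Fintype.piFinset_univ] at h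
  rw [← h]
  exact Finset.prod_congr rfl fun i _ => by rw [Fintype.sum_bool]

lemma integral_toyMeasure {n : ℕ} (p p' : Fin n → ℝ) (η : ℝ)
    (hm : ∀ ω, 0 ≤ toyMass p p' η ω) (f : (Fin n → Bool) × Bool × Bool → ℝ) :
    ∫ ω, f ω ∂ toyMeasure p p' η = ∑ ω, toyMass p p' η ω * f ω := by
  rw [toyMeasure, integral_finset_sum_measure (fun ω _ =>
    (Integrable.of_finite (μ := Measure.dirac ω) (f := f)).smul_measure ENNReal.ofReal_ne_top)]
  refine Finset.sum_congr rfl fun ω _ => ?_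
  rw [integral_smul_measure, integral_dirac, smul_eq_mul, ENNReal.toReal_ofReal (hm ω)]

lemma sum_bpMass_mul {n : ℕ} (q : Fin n → ℝ) (F : Fin n → Bool → ℝ) :
    ∑ x : Fin n → Bool, bpMass q x * ∏ i, F i (x i)
      = ∏ i, (q i * F i true + (1 - q i) * F i false) := by
  have h : ∀ x : Fin n → Bool, bpMass q x * ∏ i, F i (x i)
      = ∏ i, ((if x i then q i else 1 - q i) * F i (x i)) := fun x => by
    rw [bpMass, ← Finset.prod_mul_distrib]
  simp_rw [h]
  rw [sum_pi_bool (fun i b => (if b then q i else 1 - q i) * F i b)]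
  simp

lemma bp_total {n : ℕ} (q : Fin n → ℝ) : ∑ x : Fin n → Bool, bpMass q x = 1 := by
  have := sum_bpMass_mul q (fun _ _ => 1)
  simpa using this

lemma bp_one {n : ℕ} (q : Fin n → ℝ) (j : Fin n) :
    ∑ x : Fin n → Bool, bpMass q x * pmOne (x j) = 2 * q j - 1 := by
  have h : ∀ x : Fin n → Bool, pmOne (x j) = ∏ i, (if i = j then pmOne (x i) else 1) := by
    intro x; rw [Finset.prod_ite_eq']; simp
  simp_rw [h]
  rw [sum_bpMass_mul q (fun i b => if i = j then pmOne b else 1)]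
  have h2 : ∀ i : Fin n, (q i * (if i = j then pmOne true else 1)
      + (1 - q i) * (if i = j then pmOne false else 1)) = if i = j then 2 * q i - 1 else 1 := by
    intro i; split_ifs <;> simp [pmOne] <;> ring
  simp_rw [h2]
  rw [Finset.prod_ite_eq']; simp

lemma bp_two {n : ℕ} (q : Fin n → ℝ) (j l : Fin n) :
    ∑ x : Fin n → Bool, bpMass q x * (pmOne (x j) * pmOne (x l))
      = if j = l then 1 else (2 * q j - 1) * (2 * q l - 1) := by
  have h : ∀ x : Fin n → Bool, pmOne (x j) * pmOne (x l)
      = ∏ i, ((if i = j then pmOne (x i) else 1) * (if i = l then pmOne (x i) else 1)) := by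
    intro x
    rw [Finset.prod_mul_distrib, Finset.prod_ite_eq', Finset.prod_ite_eq']
    simp
  simp_rw [h]
  rw [sum_bpMass_mul q (fun i b => (if i = j then pmOne b else 1) * (if i = l then pmOne b else 1))]
  by_cases hjl : j = l
  · subst hjl
    have h2 : ∀ i : Fin n, (q i * ((if i = j then pmOne true else 1) * (if i = j then pmOne true else 1))
        + (1 - q i) * ((if i = j then pmOne false else 1) * (if i = j then pmOne false else 1))) = 1 := by
      intro i; split_ifs <;> simp [pmOne]
    simp_rw [h2]
    simp
  · have h2 : ∀ i : Fin n, (q i * ((if i = j then pmOne true else 1) * (if i = l then pmOne true else 1))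
        + (1 - q i) * ((if i = j then pmOne false else 1) * (if i = l then pmOne false else 1)))
        = (if i = j then 2 * q i - 1 else 1) * (if i = l then 2 * q i - 1 else 1) := by
      intro i
      split_ifs with h1 h2
      · exact absurd (h1 ▸ h2) hjl
      all_goals (simp [pmOne]; try ring)
    simp_rw [h2]
    rw [Finset.prod_mul_distrib, Finset.prod_ite_eq', Finset.prod_ite_eq']
    simp [hjl]

lemma toySum {n : ℕ} (p p' : Fin n → ℝ) (η : ℝ) (f : (Fin n → Bool) → ℝ) (g : Bool → Bool → ℝ) :
    ∑ ω : (Fin n → Bool) × Bool × Bool, toyMass p p' η ω * (f ω.1 * g ω.2.1 ω.2.2) =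
      (1/2) * (((1-η) * g true true + η * g false true) * ∑ x, bpMass p x * f x
        + (η * g true false + (1-η) * g false false) * ∑ x, bpMass p' x * f x) := by
  rw [Fintype.sum_prod_type]
  simp only [Fintype.sum_prod_type, Fintype.sum_bool, toyMass]
  simp only [Finset.mul_sum, mul_add, ← Finset.sum_add_distrib]
  refine Finset.sum_congr rfl fun x _ => by simp; ring

lemma toy_I0 {n : ℕ} (p p' : Fin n → ℝ) (η : ℝ) :
    ∑ ω : (Fin n → Bool) × Bool × Bool, toyMass p p' η ω = 1 := by
  have h := toySum p p' η (fun _ => 1) (fun _ _ => 1)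
  simp only [mul_one] at h
  rw [h, bp_total, bp_total]; ring

lemma toy_IX {n : ℕ} (p p' : Fin n → ℝ) (η : ℝ) (j : Fin n) :
    ∑ ω : (Fin n → Bool) × Bool × Bool, toyMass p p' η ω * pmOne (ω.1 j)
      = p j + p' j - 1 := by
  have h := toySum p p' η (fun x => pmOne (x j)) (fun _ _ => 1)
  simp only [mul_one] at h
  rw [h, bp_one, bp_one]; ring

lemma toy_IY {n : ℕ} (p p' : Fin n → ℝ) (η : ℝ) :
    ∑ ω : (Fin n → Bool) × Bool × Bool, toyMass p p' η ω * pmOne ω.2.1 = 0 := by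
  have h := toySum p p' η (fun _ => 1) (fun y _ => pmOne y)
  simp only [one_mul, mul_one] at h
  rw [h, bp_total, bp_total]
  simp [pmOne]

lemma toy_IXY {n : ℕ} (p p' : Fin n → ℝ) (η : ℝ) (j : Fin n) :
    ∑ ω : (Fin n → Bool) × Bool × Bool, toyMass p p' η ω * (pmOne (ω.1 j) * pmOne ω.2.1)
      = (1 - 2*η) * (p j - p' j) := by
  have h := toySum p p' η (fun x => pmOne (x j)) (fun y _ => pmOne y)
  rw [h, bp_one, bp_one]
  simp [pmOne]; ring

lemma toy_IXX {n : ℕ} (p p' : Fin n → ℝ) (η : ℝ) (j l : Fin n) :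
    ∑ ω : (Fin n → Bool) × Bool × Bool, toyMass p p' η ω * (pmOne (ω.1 j) * pmOne (ω.1 l))
      = if j = l then 1 else
        ((p j + p' j - 1) * (p l + p' l - 1) + (p j - p' j) * (p l - p' l)) := by
  have h := toySum p p' η (fun x => pmOne (x j) * pmOne (x l)) (fun _ _ => 1)
  simp only [mul_one] at h
  rw [h, bp_two, bp_two]
  split_ifs
  · ring
  · ring

/-- Explicit form of the risk-minimizing linear solution on the toy distribution:
`β_i = k(1−2η)(p_i − p_i') / (1 − ½(2p_i−1)² − ½(2p_i'−1)²)` with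
`k = kConst p p' > 0`, and `β₀ + Σ (p_i + p_i' − 1) β_i = 0`. -/
theorem stmt_6 {n : ℕ} (p p' : Fin n → ℝ) (η : ℝ)
    (hp : ∀ i, p i ∈ Set.Ioo (0:ℝ) 1) (hp' : ∀ i, p' i ∈ Set.Ioo (0:ℝ) 1)
    (hη : η ∈ Set.Icc (0:ℝ) 1)
    (β0 : ℝ) (β : Fin n → ℝ)
    (hmin : ∀ γ0 : ℝ, ∀ γ : Fin n → ℝ, toyRisk p p' η β0 β ≤ toyRisk p p' η γ0 γ) :
    0 < kConst p p' ∧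
    (∀ i, β i = kConst p p' * (1 - 2 * η) * (p i - p' i) /
        (1 - (1/2) * (2 * p i - 1)^2 - (1/2) * (2 * p' i - 1)^2)) ∧
    β0 + ∑ i, (p i + p' i - 1) * β i = 0 := by
  -- nonnegativity of the mass
  have hbp : ∀ (q : Fin n → ℝ), (∀ i, q i ∈ Set.Ioo (0:ℝ) 1) →
      ∀ x : Fin n → Bool, 0 ≤ bpMass q x := by
    intro q hq x
    apply Finset.prod_nonneg
    intro i _
    split_ifs
    · exact (hq i).1.le
    · linarith [(hq i).2]
  have hm : ∀ ω, 0 ≤ toyMass p p' η ω := by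
    intro ω
    refine mul_nonneg (mul_nonneg (by norm_num) ?_) ?_
    · split_ifs
      · exact hbp p hp ω.1
      · exact hbp p' hp' ω.1
    · split_ifs
      · linarith [hη.2]
      · exact hη.1
  have hrisk : ∀ c0 : ℝ, ∀ c : Fin n → ℝ, toyRisk p p' η c0 c
      = ∑ ω : (Fin n → Bool) × Bool × Bool,
        toyMass p p' η ω * (c0 + ∑ i, c i * pmOne (ω.1 i) - pmOne ω.2.1)^2 :=
    fun c0 c => integral_toyMeasure p p' η hm _
  -- stationarity: the directional derivative vanishes in every direction
  have key : ∀ γ0 : ℝ, ∀ γ : Fin n → ℝ,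
      ∑ ω : (Fin n → Bool) × Bool × Bool, toyMass p p' η ω *
        ((β0 + ∑ i, β i * pmOne (ω.1 i) - pmOne ω.2.1) * (γ0 + ∑ i, γ i * pmOne (ω.1 i))) = 0 := by
    intro γ0 γ
    have hA : 0 ≤ ∑ ω : (Fin n → Bool) × Bool × Bool,
        toyMass p p' η ω * (γ0 + ∑ i, γ i * pmOne (ω.1 i))^2 :=
      Finset.sum_nonneg fun ω _ => mul_nonneg (hm ω) (sq_nonneg _)
    have h2B : 2 * (∑ ω : (Fin n → Bool) × Bool × Bool, toyMass p p' η ω *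
        ((β0 + ∑ i, β i * pmOne (ω.1 i) - pmOne ω.2.1) * (γ0 + ∑ i, γ i * pmOne (ω.1 i)))) = 0 := by
      apply quad_nonneg_linear_zero _ _ hA
      intro t
      have h1 := hmin (β0 + t * γ0) (fun i => β i + t * γ i)
      rw [hrisk, hrisk] at h1
      have expand : ∑ ω : (Fin n → Bool) × Bool × Bool, toyMass p p' η ω *
            (β0 + t * γ0 + (∑ i, (β i + t * γ i) * pmOne (ω.1 i)) - pmOne ω.2.1)^2
          = (∑ ω : (Fin n → Bool) × Bool × Bool,
              toyMass p p' η ω * (β0 + ∑ i, β i * pmOne (ω.1 i) - pmOne ω.2.1)^2)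
            + ((∑ ω : (Fin n → Bool) × Bool × Bool,
                toyMass p p' η ω * (γ0 + ∑ i, γ i * pmOne (ω.1 i))^2) * t^2
              + (2 * (∑ ω : (Fin n → Bool) × Bool × Bool, toyMass p p' η ω *
                ((β0 + ∑ i, β i * pmOne (ω.1 i) - pmOne ω.2.1)
                  * (γ0 + ∑ i, γ i * pmOne (ω.1 i))))) * t) := by
        rw [Finset.sum_mul, Finset.mul_sum, Finset.sum_mul, ← Finset.sum_add_distrib,
          ← Finset.sum_add_distrib]
        refine Finset.sum_congr rfl fun ω _ => ?_
        have hsum : ∑ i, (β i + t * γ i) * pmOne (ω.1 i)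
            = (∑ i, β i * pmOne (ω.1 i)) + t * ∑ i, γ i * pmOne (ω.1 i) := by
          rw [Finset.mul_sum, ← Finset.sum_add_distrib]
          exact Finset.sum_congr rfl fun i _ => by ring
        rw [hsum]; ring
      rw [expand] at h1
      linarith
    linarith
  -- the two types of normal equations
  have E0 : β0 + ∑ i, β i * (p i + p' i - 1) = 0 := by
    have e := key 1 (fun _ => 0)
    simp only [zero_mul, Finset.sum_const_zero, add_zero, mul_one] at e
    have expand : ∑ ω : (Fin n → Bool) × Bool × Bool, toyMass p p' η ω *
          (β0 + ∑ i, β i * pmOne (ω.1 i) - pmOne ω.2.1)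
        = β0 * (∑ ω : (Fin n → Bool) × Bool × Bool, toyMass p p' η ω)
          + (∑ i, β i * ∑ ω : (Fin n → Bool) × Bool × Bool, toyMass p p' η ω * pmOne (ω.1 i))
          - ∑ ω : (Fin n → Bool) × Bool × Bool, toyMass p p' η ω * pmOne ω.2.1 := by
      have : ∀ i : Fin n, β i * ∑ ω : (Fin n → Bool) × Bool × Bool,
          toyMass p p' η ω * pmOne (ω.1 i)
          = ∑ ω : (Fin n → Bool) × Bool × Bool, toyMass p p' η ω * (β i * pmOne (ω.1 i)) := by
        intro i
        rw [Finset.mul_sum]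
        exact Finset.sum_congr rfl fun ω _ => by ring
      simp_rw [this]
      rw [Finset.mul_sum, Finset.sum_comm, ← Finset.sum_add_distrib, ← Finset.sum_sub_distrib]
      refine Finset.sum_congr rfl fun ω _ => ?_
      rw [← Finset.mul_sum]
      ring
    rw [expand, toy_I0, toy_IY] at e
    simp_rw [toy_IX p p' η] at e
    linarith
  have Ej : ∀ j : Fin n, β0 * (p j + p' j - 1)
      + (∑ i, β i * (if i = j then 1 else
          ((p i + p' i - 1) * (p j + p' j - 1) + (p i - p' i) * (p j - p' j))))
      = (1 - 2*η) * (p j - p' j) := by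
    intro j
    have e := key 0 (fun i => if i = j then (1:ℝ) else 0)
    have hG : ∀ ω : (Fin n → Bool) × Bool × Bool,
        (0 : ℝ) + ∑ i, (if i = j then (1:ℝ) else 0) * pmOne (ω.1 i) = pmOne (ω.1 j) := by
      intro ω
      rw [zero_add]
      simp_rw [ite_mul, zero_mul, one_mul]
      rw [Finset.sum_ite_eq' Finset.univ j]
      simp
    simp_rw [hG] at e
    have expand : ∑ ω : (Fin n → Bool) × Bool × Bool, toyMass p p' η ω *
          ((β0 + ∑ i, β i * pmOne (ω.1 i) - pmOne ω.2.1) * pmOne (ω.1 j))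
        = β0 * (∑ ω : (Fin n → Bool) × Bool × Bool, toyMass p p' η ω * pmOne (ω.1 j))
          + (∑ i, β i * ∑ ω : (Fin n → Bool) × Bool × Bool,
              toyMass p p' η ω * (pmOne (ω.1 i) * pmOne (ω.1 j)))
          - ∑ ω : (Fin n → Bool) × Bool × Bool,
              toyMass p p' η ω * (pmOne (ω.1 j) * pmOne ω.2.1) := by
      have : ∀ i : Fin n, β i * ∑ ω : (Fin n → Bool) × Bool × Bool,
          toyMass p p' η ω * (pmOne (ω.1 i) * pmOne (ω.1 j))
          = ∑ ω : (Fin n → Bool) × Bool × Bool,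
            toyMass p p' η ω * (β i * (pmOne (ω.1 i) * pmOne (ω.1 j))) := by
        intro i
        rw [Finset.mul_sum]
        exact Finset.sum_congr rfl fun ω _ => by ring
      simp_rw [this]
      rw [Finset.mul_sum, Finset.sum_comm, ← Finset.sum_add_distrib, ← Finset.sum_sub_distrib]
      refine Finset.sum_congr rfl fun ω _ => ?_
      have hfac : ∑ i, β i * (pmOne (ω.1 i) * pmOne (ω.1 j))
          = (∑ i, β i * pmOne (ω.1 i)) * pmOne (ω.1 j) := by
        rw [Finset.sum_mul]
        exact Finset.sum_congr rfl fun i _ => by ring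
      rw [← Finset.mul_sum, hfac]
      ring
    rw [expand, toy_IX, toy_IXY] at e
    simp_rw [toy_IXX p p' η] at e
    linarith
  -- positivity of denominators
  have hD : ∀ i : Fin n, 0 < 1 - (1/2) * (2 * p i - 1)^2 - (1/2) * (2 * p' i - 1)^2 := by
    intro i
    nlinarith [(hp i).1, (hp i).2, (hp' i).1, (hp' i).2]
  -- rewrite the normal equations into the split form
  have hsplit : ∀ j : Fin n,
      β j * (1 - (1/2) * (2 * p j - 1)^2 - (1/2) * (2 * p' j - 1)^2)
        = ((1 - 2*η) - ∑ i, β i * (p i - p' i)) * (p j - p' j) := by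
    intro j
    have e := Ej j
    have hiden : ∀ i : Fin n, (if i = j then (1:ℝ) else
        ((p i + p' i - 1) * (p j + p' j - 1) + (p i - p' i) * (p j - p' j)))
        = ((p i + p' i - 1) * (p j + p' j - 1) + (p i - p' i) * (p j - p' j))
          + (if i = j then (1 - (1/2) * (2 * p j - 1)^2 - (1/2) * (2 * p' j - 1)^2) else 0) := by
      intro i
      split_ifs with h
      · subst h; ring
      · ring
    simp_rw [hiden, mul_add, Finset.sum_add_distrib] at e
    have hlast : ∑ i, β i * (if i = j then
        (1 - (1/2) * (2 * p j - 1)^2 - (1/2) * (2 * p' j - 1)^2) else 0)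
        = β j * (1 - (1/2) * (2 * p j - 1)^2 - (1/2) * (2 * p' j - 1)^2) := by
      simp_rw [mul_ite, mul_zero]
      rw [Finset.sum_ite_eq' Finset.univ j]
      simp
    rw [hlast] at e
    have hm1 : ∑ x, β x * ((p x + p' x - 1) * (p j + p' j - 1))
        = (∑ x, β x * (p x + p' x - 1)) * (p j + p' j - 1) := by
      rw [Finset.sum_mul]
      exact Finset.sum_congr rfl fun i _ => by ring
    have hm2 : ∑ x, β x * ((p x - p' x) * (p j - p' j))
        = (∑ x, β x * (p x - p' x)) * (p j - p' j) := by
      rw [Finset.sum_mul]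
      exact Finset.sum_congr rfl fun i _ => by ring
    rw [hm1, hm2] at e
    have hb : ∑ x, β x * (p x + p' x - 1) = -β0 := by linarith [E0]
    rw [hb] at e
    linear_combination e
  set S := ∑ i, β i * (p i - p' i) with hSdef
  set T := ∑ i, (p i - p' i)^2 /
      (1 - (1/2) * (2 * p i - 1)^2 - (1/2) * (2 * p' i - 1)^2) with hTdef
  have hT : 0 ≤ T := Finset.sum_nonneg fun i _ => div_nonneg (sq_nonneg _) (hD i).le
  have h1T : (0:ℝ) < 1 + T := by linarith
  have hk : kConst p p' = 1 / (1 + T) := by rw [kConst]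
  have hST : S = ((1 - 2*η) - S) * T := by
    rw [hSdef, hTdef, Finset.mul_sum]
    refine Finset.sum_congr rfl fun i _ => ?_
    have hDi := (hD i).ne'
    have h := hsplit i
    rw [mul_div_assoc', eq_div_iff hDi]
    linear_combination (p i - p' i) * h
  have hfinal : (1 - 2*η) - S = (1 - 2*η) * kConst p p' := by
    rw [hk, mul_one_div, eq_div_iff h1T.ne']
    linear_combination -hST
  refine ⟨?_, ?_, ?_⟩
  · rw [hk]; positivity
  · intro i
    have hDi := (hD i).ne'
    have h := hsplit i
    rw [hfinal] at h
    rw [eq_div_iff hDi]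
    linear_combination h
  · have : ∑ i, (p i + p' i - 1) * β i = ∑ i, β i * (p i + p' i - 1) :=
      Finset.sum_congr rfl fun i _ => by ring
    rw [this]
    exact E0
end

section
/- Let S = Σ_{i=1}^n β_i X_i where each β_i ≠ 0 and X = (X_1,…,X_n) has independent ±1 coordinates with P[X_i = 1] = p_i ∈ [ε, 1−ε]. Then AC(S) := max_s P[S = s] ≤ C/√n for a constant C = C(ε) depending only on ε. -/
open MeasureTheory

/-!
Write `P[X_i = c] = ε + b_i(c)` with `b_i ≥ 0` and `b_i(true) + b_i(false) = 1 - 2ε`, and expand the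
product mass over the set `T` of coordinates that take the `ε` summand. For fixed `T` these
coordinates are uniform, and after flipping signs so that all `β_i > 0` the level set `{S = s}` is
an antichain of the Boolean cube, so by Sperner it has at most
`C(|T|, |T|/2) ≤ √2 · 2^|T| / √(|T|+1)` points. Summing over `T` leaves `√2 · E[(K+1)^(-1/2)]`
with `K ~ Bin(n, 2ε)`, and Jensen together with `E[1/(K+1)] ≤ 1/((n+1)·2ε)` gives
`AC(S) ≤ 1/√((n+1)ε)`.
-/

open Finset

lemma Nat.centralBinom_sq_mul_succ_le (k : ℕ) : (k.centralBinom : ℝ) ^ 2 * (k + 1) ≤ 16 ^ k := by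
  induction k with
  | zero => simp
  | succ k ih =>
    have hrec : ((k : ℝ) + 1) * (k + 1).centralBinom = 2 * (2 * k + 1) * k.centralBinom := by
      exact_mod_cast Nat.succ_mul_centralBinom_succ k
    have hcoeff : 4 * (2 * (k : ℝ) + 1) ^ 2 * (k + 2) ≤ 16 * (k + 1) ^ 3 := by
      nlinarith [k.cast_nonneg (α := ℝ)]
    push_cast
    refine le_of_mul_le_mul_right ?_ (by positivity : (0 : ℝ) < (k + 1) ^ 2)
    calc ((k + 1).centralBinom : ℝ) ^ 2 * (k + 1 + 1) * (k + 1) ^ 2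
        = (k + 2) * (((k : ℝ) + 1) * (k + 1).centralBinom) ^ 2 := by ring
      _ = 4 * (2 * (k : ℝ) + 1) ^ 2 * (k + 2) * k.centralBinom ^ 2 := by rw [hrec]; ring
      _ ≤ 16 * (k + 1) ^ 3 * k.centralBinom ^ 2 := by gcongr
      _ = 16 * (k.centralBinom ^ 2 * (k + 1)) * (k + 1) ^ 2 := by ring
      _ ≤ 16 ^ (k + 1) * (k + 1) ^ 2 := by rw [_root_.pow_succ' (16 : ℝ)]; gcongr

lemma Nat.choose_half_sq_mul_succ_le (m : ℕ) :
    (m.choose (m / 2) : ℝ) ^ 2 * (m + 1) ≤ 2 * 4 ^ m := by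
  obtain ⟨k, rfl | rfl⟩ := m.even_or_odd'
  · have h := Nat.centralBinom_sq_mul_succ_le k
    rw [show 2 * k / 2 = k by omega, ← Nat.centralBinom_eq_two_mul_choose,
      show (4 : ℝ) ^ (2 * k) = 16 ^ k by rw [pow_mul]; norm_num]
    push_cast
    nlinarith [sq_nonneg (k.centralBinom : ℝ)]
  · have h := Nat.centralBinom_sq_mul_succ_le (k + 1)
    have hhalf : (2 * (2 * k + 1).choose k : ℝ) = (k + 1).centralBinom := by
      rw [Nat.centralBinom_eq_two_mul_choose, show 2 * (k + 1) = 2 * k + 1 + 1 by ring,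
        Nat.choose_succ_succ', ← Nat.choose_symm_half]
      push_cast; ring
    rw [← hhalf, pow_succ (16 : ℝ)] at h
    rw [show (2 * k + 1) / 2 = k by omega,
      show (4 : ℝ) ^ (2 * k + 1) = 16 ^ k * 4 by rw [pow_succ, pow_mul]; norm_num]
    push_cast at h ⊢
    nlinarith [sq_nonneg ((2 * k + 1).choose k : ℝ)]

lemma Nat.choose_half_le (m : ℕ) :
    (m.choose (m / 2) : ℝ) ≤ √2 * 2 ^ m / √(m + 1) := by
  rw [le_div_iff₀ (by positivity), ← Real.sqrt_sq (by positivity : (0 : ℝ) ≤ 2 ^ m),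
    ← Real.sqrt_mul zero_le_two, ← Real.sqrt_sq (Nat.cast_nonneg (m.choose (m / 2))),
    ← Real.sqrt_mul (sq_nonneg _), ← pow_mul, mul_comm m 2, pow_mul]
  exact Real.sqrt_le_sqrt (by norm_num; exact Nat.choose_half_sq_mul_succ_le m)

lemma sum_choose_mul_pow_div_succ_le (n : ℕ) {t : ℝ} (ht : 0 < t) (ht1 : t ≤ 1) :
    ∑ k ∈ range (n + 1), n.choose k * t ^ k * (1 - t) ^ (n - k) / (k + 1)
      ≤ 1 / ((n + 1) * t) := by
  rw [le_div_iff₀ (by positivity), sum_mul]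
  have hterm : ∀ k ∈ range (n + 1),
      n.choose k * t ^ k * (1 - t) ^ (n - k) / (k + 1) * ((n + 1) * t)
        = t ^ (k + 1) * (1 - t) ^ (n + 1 - (k + 1)) * (n + 1).choose (k + 1) := by
    intro k _
    have hchoose : ((n : ℝ) + 1) * n.choose k = (n + 1).choose (k + 1) * (k + 1) := by
      exact_mod_cast Nat.add_one_mul_choose_eq n k
    rw [Nat.add_sub_add_right]
    field_simp
    linear_combination t ^ (k + 1) * (1 - t) ^ (n - k) * hchoose
  have hbinom := add_pow t (1 - t) (n + 1)
  rw [add_sub_cancel, one_pow, sum_range_succ'] at hbinom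
  have h0 : 0 ≤ t ^ 0 * (1 - t) ^ (n + 1 - 0) * (n + 1).choose 0 := by
    have : 0 ≤ 1 - t := by linarith
    positivity
  rw [sum_congr rfl hterm]
  linarith

lemma sum_choose_mul_pow_div_sqrt_succ_le (n : ℕ) {t : ℝ} (ht : 0 < t) (ht1 : t ≤ 1) :
    ∑ k ∈ range (n + 1), n.choose k * t ^ k * (1 - t) ^ (n - k) / √(k + 1)
      ≤ 1 / √((n + 1) * t) := by
  set w : ℕ → ℝ := fun k => n.choose k * t ^ k * (1 - t) ^ (n - k)
  have hw : ∀ k ∈ range (n + 1), 0 ≤ w k := fun k _ => by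
    have : 0 ≤ 1 - t := by linarith
    positivity
  have hw1 : ∑ k ∈ range (n + 1), w k = 1 := by
    have h := add_pow t (1 - t) n
    rw [add_sub_cancel, one_pow] at h
    rw [h]
    exact sum_congr rfl fun k _ => by ring
  have hjensen := Real.strictConcaveOn_sqrt.concaveOn.le_map_sum hw hw1
    (p := fun k : ℕ => 1 / ((k : ℝ) + 1)) (fun k _ => by simp; positivity)
  simp only [smul_eq_mul] at hjensen
  calc _ = ∑ k ∈ range (n + 1), w k * √(1 / (k + 1)) :=
        sum_congr rfl fun k _ => by rw [one_div, Real.sqrt_inv]; ring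
    _ ≤ √(∑ k ∈ range (n + 1), w k * (1 / (k + 1))) := hjensen
    _ ≤ √(1 / ((n + 1) * t)) := by
        gcongr
        exact (sum_congr rfl fun k _ => by ring).trans_le
          (sum_choose_mul_pow_div_succ_le n ht ht1)
    _ = 1 / √((n + 1) * t) := by rw [one_div, Real.sqrt_inv, one_div]

lemma pmOne_strictMono : StrictMono pmOne := by
  intro a b
  cases a <;> cases b <;> norm_num [pmOne]

lemma pmOne_not (b : Bool) : pmOne (!b) = -pmOne b := by
  cases b <;> simp [pmOne]

section LevelSet

variable {ι : Type*} [Fintype ι] [DecidableEq ι]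

noncomputable def pmLevel (β : ι → ℝ) (s : ℝ) : Finset (ι → Bool) :=
  {x | ∑ i, β i * pmOne (x i) = s}

lemma mem_pmLevel {β : ι → ℝ} {s : ℝ} {x : ι → Bool} :
    x ∈ pmLevel β s ↔ ∑ i, β i * pmOne (x i) = s := by
  simp [pmLevel]

lemma isAntichain_pmLevel {β : ι → ℝ} (hβ : ∀ i, 0 < β i) (s : ℝ) :
    IsAntichain (· ≤ ·) (pmLevel β s : Set (ι → Bool)) := by
  intro x hx y hy hne hle
  obtain ⟨-, i, hi⟩ := Pi.lt_def.mp (lt_of_le_of_ne hle hne)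
  have hlt : ∑ j, β j * pmOne (x j) < ∑ j, β j * pmOne (y j) :=
    sum_lt_sum (fun j _ => mul_le_mul_of_nonneg_left
        (pmOne_strictMono.monotone (hle j)) (hβ j).le)
      ⟨i, mem_univ i, mul_lt_mul_of_pos_left (pmOne_strictMono hi) (hβ i)⟩
  rw [mem_coe, mem_pmLevel] at hx hy
  exact hlt.ne (hx.trans hy.symm)

lemma card_pmLevel_le_of_pos {β : ι → ℝ} (hβ : ∀ i, 0 < β i) (s : ℝ) :
    #(pmLevel β s) ≤ (Fintype.card ι).choose (Fintype.card ι / 2) := by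
  let φ : (ι → Bool) → Finset ι := fun x => {i | x i = true}
  have hφ : ∀ x y, φ x ⊆ φ y ↔ x ≤ y := by
    intro x y
    simp [φ, subset_iff, Pi.le_def, Bool.le_iff_imp]
  have hinj : Function.Injective φ := fun x y h =>
    le_antisymm ((hφ x y).mp h.le) ((hφ y x).mp h.ge)
  have hanti : IsAntichain (· ⊆ ·) ((pmLevel β s).image φ : Set (Finset ι)) := by
    rw [coe_image]
    exact (isAntichain_pmLevel hβ s).image φ fun x y => (hφ x y).mp
  rw [← card_image_of_injective _ hinj]
  exact hanti.sperner

lemma card_pmLevel_le {β : ι → ℝ} (hβ : ∀ i, β i ≠ 0) (s : ℝ) :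
    #(pmLevel β s) ≤ (Fintype.card ι).choose (Fintype.card ι / 2) := by
  let flip : (ι → Bool) → (ι → Bool) := fun x i => if 0 < β i then x i else !x i
  have hflip : ∀ x, flip (flip x) = x := fun x => funext fun i => by
    by_cases hi : 0 < β i <;> simp [flip, hi]
  have hsum : ∀ x, ∑ i, |β i| * pmOne (flip x i) = ∑ i, β i * pmOne (x i) := fun x =>
    sum_congr rfl fun i _ => by
      rcases (hβ i).lt_or_gt with hi | hi
      · simp [flip, hi.not_gt, abs_of_neg hi, pmOne_not]
      · simp [flip, hi, abs_of_pos hi]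
  have hcard : #(pmLevel β s) = #(pmLevel (fun i => |β i|) s) :=
    card_nbij' flip flip (fun x hx => by simpa [mem_pmLevel, hsum] using hx)
      (fun x hx => by simpa [mem_pmLevel, ← hsum, hflip] using hx)
      (fun x _ => hflip x) (fun x _ => hflip x)
  exact hcard ▸ card_pmLevel_le_of_pos (fun i => abs_pos.mpr (hβ i)) s

lemma sum_sum_ite_prod_le {κ : Type*} [Fintype κ] [DecidableEq κ] {β : ι → ℝ}
    (hβ : ∀ i, β i ≠ 0) (γ : κ → ℝ) {w : κ → Bool → ℝ} (hw : ∀ k b, 0 ≤ w k b) (s : ℝ) :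
    ∑ z : ι → Bool, ∑ y : κ → Bool,
        (if ∑ i, β i * pmOne (z i) + ∑ k, γ k * pmOne (y k) = s then ∏ k, w k (y k) else 0)
      ≤ (Fintype.card ι).choose (Fintype.card ι / 2) * ∏ k, ∑ b, w k b := by
  rw [sum_comm, Fintype.prod_sum, mul_sum]
  gcongr with y
  simp_rw [← eq_sub_iff_add_eq]
  rw [← sum_filter, sum_const, nsmul_eq_mul]
  gcongr
  · exact prod_nonneg fun k _ => hw k (y k)
  · exact_mod_cast card_pmLevel_le hβ _

lemma sum_pmLevel_prod_compl_le {β : ι → ℝ} (hβ : ∀ i, β i ≠ 0) {w : ι → Bool → ℝ}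
    (hw : ∀ i b, 0 ≤ w i b) (s : ℝ) (T : Finset ι) :
    ∑ x ∈ pmLevel β s, ∏ i ∈ Tᶜ, w i (x i) ≤ (#T).choose (#T / 2) * ∏ i ∈ Tᶜ, ∑ b, w i b := by
  let e := Equiv.piEquivPiSubtypeProd (· ∈ T) (fun _ => Bool)
  have hcompl : ∀ f : ι → ℝ, ∏ i ∈ Tᶜ, f i = ∏ i : {i // i ∉ T}, f i :=
    fun f => prod_subtype _ (fun i => mem_compl) f
  have hsum : ∀ x, ∑ i, β i * pmOne (x i) =
      ∑ i : T, β i * pmOne ((e x).1 i) + ∑ i : {i // i ∉ T}, β i * pmOne ((e x).2 i) := by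
    intro x
    rw [← sum_add_sum_compl T, ← sum_coe_sort T, sum_subtype Tᶜ (fun i => mem_compl)]
    rfl
  rw [pmLevel, sum_filter, ← e.symm.sum_comp, Fintype.sum_prod_type, hcompl, ← Fintype.card_coe T]
  have hcoord : ∀ y (i : {i // i ∉ T}), (e.symm y) i = y.2 i := fun y i => by
    simp [e, Equiv.piEquivPiSubtypeProd_symm_apply, i.2]
  simp only [hsum, hcompl, hcoord, Equiv.apply_symm_apply]
  exact sum_sum_ite_prod_le (β := fun i : T => β i) (fun i => hβ i) _
    (w := fun i : {i // i ∉ T} => w i) (fun i => hw i) s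

lemma sum_powerset_pow_mul_choose_half_le {ε : ℝ} (hε : 0 < ε) (hε2 : ε ≤ 1 / 2) :
    ∑ T ∈ (univ : Finset ι).powerset, ε ^ #T * ((#T).choose (#T / 2) * (1 - 2 * ε) ^ #Tᶜ)
      ≤ 1 / √((Fintype.card ι + 1) * ε) := by
  set n := Fintype.card ι
  have hterm : ∀ T ∈ (univ : Finset ι).powerset,
      ε ^ #T * ((#T).choose (#T / 2) * (1 - 2 * ε) ^ #Tᶜ)
        ≤ √2 * ((2 * ε) ^ #T * (1 - 2 * ε) ^ (n - #T) / √(#T + 1)) := by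
    intro T _
    have h12ε : 0 ≤ 1 - 2 * ε := by linarith
    calc ε ^ #T * ((#T).choose (#T / 2) * (1 - 2 * ε) ^ #Tᶜ)
        ≤ ε ^ #T * (√2 * 2 ^ #T / √(#T + 1) * (1 - 2 * ε) ^ #Tᶜ) := by
          gcongr; exact Nat.choose_half_le _
      _ = _ := by rw [card_compl, mul_pow]; ring
  have hfinal : √2 * (1 / √((n + 1) * (2 * ε))) = 1 / √((n + 1) * ε) := by
    rw [mul_left_comm, Real.sqrt_mul zero_le_two]
    field_simp
  calc _ ≤ ∑ T ∈ (univ : Finset ι).powerset,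
          √2 * ((2 * ε) ^ #T * (1 - 2 * ε) ^ (n - #T) / √(#T + 1)) := sum_le_sum hterm
    _ = √2 * ∑ k ∈ range (n + 1), n.choose k * (2 * ε) ^ k * (1 - 2 * ε) ^ (n - k) / √(k + 1) := by
        rw [sum_powerset_apply_card
          (fun k => √2 * ((2 * ε) ^ k * (1 - 2 * ε) ^ (n - k) / √(k + 1))), card_univ, mul_sum]
        refine sum_congr rfl fun k _ => ?_
        rw [nsmul_eq_mul]
        ring
    _ ≤ √2 * (1 / √((n + 1) * (2 * ε))) := by
        gcongr
        exact sum_choose_mul_pow_div_sqrt_succ_le n (by linarith) (by linarith)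
    _ = 1 / √((n + 1) * ε) := hfinal

lemma sum_pmLevel_prod_le {ε : ℝ} (hε : 0 < ε) (hε2 : ε ≤ 1 / 2) {p : ι → ℝ}
    (hp : ∀ i, p i ∈ Set.Icc ε (1 - ε)) {β : ι → ℝ} (hβ : ∀ i, β i ≠ 0) (s : ℝ) :
    ∑ x ∈ pmLevel β s, ∏ i, (if x i then p i else 1 - p i) ≤ 1 / √((Fintype.card ι + 1) * ε) := by
  set b : ι → Bool → ℝ := fun i c => (if c then p i else 1 - p i) - ε
  have hb : ∀ i c, 0 ≤ b i c := fun i c => by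
    cases c <;> simp [b] <;> linarith [(hp i).1, (hp i).2]
  have hbsum : ∀ i, ∑ c, b i c = 1 - 2 * ε := fun i => by simp [b]
  have hexpand : ∀ x : ι → Bool, ∏ i, (if x i then p i else 1 - p i)
      = ∑ T ∈ (univ : Finset ι).powerset, ε ^ #T * ∏ i ∈ Tᶜ, b i (x i) := fun x => by
    simp_rw [compl_eq_univ_sdiff, ← prod_const, ← prod_add]
    exact prod_congr rfl fun i _ => by ring
  calc _ = ∑ T ∈ (univ : Finset ι).powerset, ε ^ #T * ∑ x ∈ pmLevel β s, ∏ i ∈ Tᶜ, b i (x i) := by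
        simp_rw [hexpand, mul_sum]; exact sum_comm
    _ ≤ ∑ T ∈ (univ : Finset ι).powerset, ε ^ #T * ((#T).choose (#T / 2) * (1 - 2 * ε) ^ #Tᶜ) := by
        refine sum_le_sum fun T _ => ?_
        gcongr
        simpa only [hbsum, prod_const] using sum_pmLevel_prod_compl_le hβ hb s T
    _ ≤ _ := sum_powerset_pow_mul_choose_half_le hε hε2

end LevelSet

lemma toReal_bpMeasure_coe {n : ℕ} {p : Fin n → ℝ} (hp : ∀ i, p i ∈ Set.Icc 0 1)
    (A : Finset (Fin n → Bool)) : (bpMeasure p A).toReal = ∑ x ∈ A, bpMass p x := by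
  have hmass : ∀ x, 0 ≤ bpMass p x := fun x => prod_nonneg fun i _ => by
    split <;> linarith [(hp i).1, (hp i).2]
  rw [bpMeasure, Measure.finsetSum_apply]
  simp only [Measure.smul_apply, Measure.dirac_apply, smul_eq_mul, Set.indicator_apply, mem_coe,
    Pi.one_apply, mul_ite, mul_one, mul_zero]
  rw [sum_ite_mem, univ_inter, ENNReal.toReal_sum fun _ _ => ENNReal.ofReal_ne_top]
  exact sum_congr rfl fun x _ => ENNReal.toReal_ofReal (hmass x)

/-- Littlewood–Offord-type anti-concentration: if `S = Σ β_i X_i` with all `β_i ≠ 0`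
and `X_i` independent `±1` variables with `P[X_i = 1] = p_i ∈ [ε, 1−ε]`, then
`AC(S) = max_s P[S = s] ≤ C/√n` for a constant `C = C(ε)`. -/
theorem stmt_9 (ε : ℝ) (hε : 0 < ε) (hε2 : ε ≤ 1/2) :
    ∃ C : ℝ, 0 < C ∧
      ∀ n : ℕ, 0 < n → ∀ p : Fin n → ℝ, (∀ i, p i ∈ Set.Icc ε (1 - ε)) →
        ∀ β : Fin n → ℝ, (∀ i, β i ≠ 0) →
        ∀ s : ℝ, (bpMeasure p {x | ∑ i, β i * pmOne (x i) = s}).toReal ≤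
          C / Real.sqrt n := by
  refine ⟨(√ε)⁻¹, by positivity, fun n hn p hp β hβ s => ?_⟩
  have hp01 : ∀ i, p i ∈ Set.Icc 0 1 := fun i =>
    ⟨hε.le.trans (hp i).1, (hp i).2.trans (by linarith)⟩
  have hlevel : {x : Fin n → Bool | ∑ i, β i * pmOne (x i) = s} = ↑(pmLevel β s) := by
    ext; simp [mem_pmLevel]
  have hn' : (0 : ℝ) < n := by exact_mod_cast hn
  rw [hlevel, toReal_bpMeasure_coe hp01]
  calc _ ≤ 1 / √((n + 1) * ε) := by simpa [bpMass] using sum_pmLevel_prod_le hε hε2 hp hβ s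
    _ ≤ 1 / √(n * ε) := by gcongr; linarith
    _ = (√ε)⁻¹ / √n := by rw [Real.sqrt_mul hn'.le]; field_simp
end

section
/- Let Err: ℝ × {−1,1} → ℝ be a 'good error function', i.e., (1) if ŷ₁y₁ > 0 and ŷ₂y₂ ≤ 0 then Err(ŷ₁,y₁) < Err(ŷ₂,y₂), and (2) for fixed y, Err(·, y) is injective. Let (Ŷ, Y) be a pair of (discrete) random variables with η₀ = P[ŶY ≤ 0], let F be the CDF of Err(Ŷ, Y), and γ = AC(Err(Ŷ,Y)). If θ ≥ η₀ + γ, then the event ŶY ≤ 0 implies F(Err(Ŷ,Y)) ≥ 1 − θ almost surely. -/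
open MeasureTheory

/-- If `Err` is a good error function (correct-sign predictions rank strictly below
wrong-sign ones, and `Err(·,y)` is injective), `η₀ = P[ŶY ≤ 0]`, `F` is the CDF of
`Err(Ŷ,Y)` and `γ` its maximum atom probability, then whenever `θ ≥ η₀ + γ`, the event
`ŶY ≤ 0` implies `F(Err(Ŷ,Y)) ≥ 1 − θ` almost surely. -/
theorem stmt_13 {Ω : Type*} [MeasurableSpace Ω] (μ : Measure Ω) [IsProbabilityMeasure μ]
    (Yhat Y : Ω → ℝ) (hYhat : Measurable Yhat) (hY : Measurable Y)
    (hYval : ∀ ω, Y ω = 1 ∨ Y ω = -1)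
    (hdisc : (Set.range fun ω => (Yhat ω, Y ω)).Countable)
    (Err : ℝ → ℝ → ℝ)
    (hgood1 : ∀ yh₁ y₁ yh₂ y₂ : ℝ, (y₁ = 1 ∨ y₁ = -1) → (y₂ = 1 ∨ y₂ = -1) →
      0 < yh₁ * y₁ → yh₂ * y₂ ≤ 0 → Err yh₁ y₁ < Err yh₂ y₂)
    (hgood2 : ∀ y yh₁ yh₂ : ℝ, yh₁ ≠ yh₂ → Err yh₁ y ≠ Err yh₂ y)
    (F : ℝ → ℝ) (hF : ∀ x, F x = (μ {ω | Err (Yhat ω) (Y ω) ≤ x}).toReal)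
    (η₀ γ θ : ℝ)
    (hη₀ : η₀ = (μ {ω | Yhat ω * Y ω ≤ 0}).toReal)
    (hγ : γ = ⨆ x : ℝ, (μ {ω | Err (Yhat ω) (Y ω) = x}).toReal)
    (hθ : η₀ + γ ≤ θ) :
    ∀ᵐ ω ∂μ, Yhat ω * Y ω ≤ 0 → 1 - θ ≤ F (Err (Yhat ω) (Y ω)) := by
  refine ae_of_all μ fun ω hω => ?_
  set e := Err (Yhat ω) (Y ω) with he
  set A := {ω' | Err (Yhat ω') (Y ω') ≤ e} with hA
  set B := {ω' | e < Err (Yhat ω') (Y ω')} with hB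
  have hsub : B ⊆ {ω' | Yhat ω' * Y ω' ≤ 0} := by
    intro ω' hω'
    by_contra h
    simp only [Set.mem_setOf_eq, not_le] at h
    exact absurd hω'
      (not_lt.2 (hgood1 (Yhat ω') (Y ω') (Yhat ω) (Y ω) (hYval ω') (hYval ω) h hω).le)
  have hμB : μ B ≤ μ {ω' | Yhat ω' * Y ω' ≤ 0} := measure_mono hsub
  have hone : (1 : ENNReal) ≤ μ A + μ B := by
    have hcov : (Set.univ : Set Ω) ⊆ A ∪ B := fun x _ => (le_or_gt (Err (Yhat x) (Y x)) e).imp id id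
    calc (1 : ENNReal) = μ Set.univ := (measure_univ).symm
      _ ≤ μ (A ∪ B) := measure_mono hcov
      _ ≤ μ A + μ B := measure_union_le _ _
  have hAfin : μ A ≠ ⊤ := (measure_lt_top μ A).ne
  have hBfin : μ B ≠ ⊤ := (measure_lt_top μ B).ne
  have hone' : (1 : ℝ) ≤ (μ A).toReal + (μ B).toReal := by
    have := ENNReal.toReal_mono (by simp [ENNReal.add_ne_top, hAfin, hBfin]) hone
    simpa [ENNReal.toReal_add hAfin hBfin] using this
  have hB' : (μ B).toReal ≤ η₀ := by
    rw [hη₀]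
    exact ENNReal.toReal_mono (measure_lt_top _ _).ne hμB
  have hγ0 : 0 ≤ γ := hγ ▸ Real.iSup_nonneg fun x => ENNReal.toReal_nonneg
  rw [hF]
  linarith
end

section
/- With Err a good error function and η₀ = P[ŶY ≤ 0], F the CDF of Err(Ŷ,Y): if θ < η₀, then the event F(Err(Ŷ,Y)) ≥ 1 − θ implies ŶY ≤ 0 almost surely. -/
open MeasureTheory

/-- If `Err` is a good error function, `η₀ = P[ŶY ≤ 0]` and `F` is the CDF of
`Err(Ŷ,Y)`, then whenever `θ < η₀`, the event `F(Err(Ŷ,Y)) ≥ 1 − θ` implies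
`ŶY ≤ 0` almost surely. -/
theorem stmt_14 {Ω : Type*} [MeasurableSpace Ω] (μ : Measure Ω) [IsProbabilityMeasure μ]
    (Yhat Y : Ω → ℝ) (hYhat : Measurable Yhat) (hY : Measurable Y)
    (hYval : ∀ ω, Y ω = 1 ∨ Y ω = -1)
    (hdisc : (Set.range fun ω => (Yhat ω, Y ω)).Countable)
    (Err : ℝ → ℝ → ℝ)
    (hgood1 : ∀ yh₁ y₁ yh₂ y₂ : ℝ, (y₁ = 1 ∨ y₁ = -1) → (y₂ = 1 ∨ y₂ = -1) →
      0 < yh₁ * y₁ → yh₂ * y₂ ≤ 0 → Err yh₁ y₁ < Err yh₂ y₂)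
    (hgood2 : ∀ y yh₁ yh₂ : ℝ, yh₁ ≠ yh₂ → Err yh₁ y ≠ Err yh₂ y)
    (F : ℝ → ℝ) (hF : ∀ x, F x = (μ {ω | Err (Yhat ω) (Y ω) ≤ x}).toReal)
    (η₀ θ : ℝ)
    (hη₀ : η₀ = (μ {ω | Yhat ω * Y ω ≤ 0}).toReal)
    (hθ : θ < η₀) :
    ∀ᵐ ω ∂μ, 1 - θ ≤ F (Err (Yhat ω) (Y ω)) → Yhat ω * Y ω ≤ 0 := by
  apply ae_of_all
  intro ω h
  by_contra hpos
  push_neg at hpos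
  set A : Set Ω := {ω | Yhat ω * Y ω ≤ 0} with hA
  have hAm : MeasurableSet A := measurableSet_le (hYhat.mul hY) measurable_const
  -- the sublevel set is contained in Aᶜ
  have hsub : {ω' | Err (Yhat ω') (Y ω') ≤ Err (Yhat ω) (Y ω)} ⊆ Aᶜ := by
    intro ω' hω'
    simp only [Set.mem_compl_iff, hA, Set.mem_setOf_eq] at *
    intro hle
    exact absurd hω' (not_le.2 (hgood1 _ _ _ _ (hYval ω) (hYval ω') hpos hle))
  have hμA : μ A ≠ ⊤ := (measure_lt_top μ A).ne
  have hcompl : μ Aᶜ = 1 - μ A := by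
    rw [measure_compl hAm hμA, measure_univ]
  have hle : F (Err (Yhat ω) (Y ω)) ≤ 1 - η₀ := by
    rw [hF, hη₀]
    have h1 : μ {ω' | Err (Yhat ω') (Y ω') ≤ Err (Yhat ω) (Y ω)} ≤ μ Aᶜ :=
      measure_mono hsub
    calc (μ {ω' | Err (Yhat ω') (Y ω') ≤ Err (Yhat ω) (Y ω)}).toReal
        ≤ (μ Aᶜ).toReal := ENNReal.toReal_mono (measure_lt_top μ _).ne h1
      _ = 1 - (μ A).toReal := by
          rw [hcompl, ENNReal.toReal_sub_of_le prob_le_one (by simp), ENNReal.toReal_one]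
  linarith
end
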